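/- arXiv:1709.07232 — 5 statements merged into one kernel-verified Lean document; each statement's English description precedes it below -/
import Mathlib

section
/- Let a, b be down-skip-free strings of length n in ℕ₀ (i.e., a_i − a_{i+1} ≤ 1 for all i) that are τ-equivalent, meaning they have the same initial state, the same number of zeros, and the same counts of zero-adjusted increments. Then the last entry a_n belongs to {0,1} if and only if b_n belongs to {0,1}. -/
/-- A string `a` of length `n` (entries `a 0, …, a (n-1)`) is down-skip-free:
consecutive decreases are at most 1. -/
def DSF (n : ℕ) (a : ℕ → ℕ) : Prop := ∀ i, i + 1 < n → a i ≤ a (i + 1) + 1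

/-- Number of zeros among `a 0, …, a (n-1)`. -/
def zeros (n : ℕ) (a : ℕ → ℕ) : ℕ := ((Finset.range n).filter fun k => a k = 0).card

/-- Number of positions `j` whose zero-adjusted increment
`a (j+1) - a j + (1 - δ_{a j, 0})` equals `r`. -/
def incCount (n : ℕ) (a : ℕ → ℕ) (r : ℕ) : ℕ :=
  ((Finset.range (n - 1)).filter fun j =>
    a (j + 1) + (if a j = 0 then 0 else 1) = a j + r).card

/-- The statistic τ: same initial state, same number of zeros, same counts of
zero-adjusted increments. -/
def TauEquiv (n : ℕ) (a b : ℕ → ℕ) : Prop :=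
  a 0 = b 0 ∧ zeros n a = zeros n b ∧ ∀ r, incCount n a r = incCount n b r

/-- zero-adjusted increment at position j -/
def rinc (a : ℕ → ℕ) (j : ℕ) : ℕ := a (j + 1) + (if a j = 0 then 0 else 1) - a j

lemma rinc_spec {n : ℕ} {a : ℕ → ℕ} (ha : DSF n a) {j : ℕ} (hj : j + 1 < n) :
    a (j + 1) + (if a j = 0 then 0 else 1) = a j + rinc a j := by
  have := ha j hj
  unfold rinc; split_ifs with h <;> omega

lemma key (n : ℕ) (hn : 0 < n) (a : ℕ → ℕ) (ha : DSF n a) :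
    a (n - 1) + (if a (n - 1) = 0 then 1 else 0) + (n - 1)
      = a 0 + (∑ j ∈ Finset.range (n - 1), rinc a j) + zeros n a := by
  induction n with
  | zero => omega
  | succ m ih =>
    rcases Nat.eq_zero_or_pos m with hm | hm
    · subst hm
      simp only [zeros, Finset.range_one, Finset.sum_range_zero, Nat.zero_sub,
        Finset.filter_singleton]
      split_ifs <;> simp_all [Finset.filter_singleton]
    · have ha' : DSF m a := fun i hi => ha i (by omega)
      have IH := ih hm ha'
      have hz : zeros (m + 1) a = zeros m a + (if a m = 0 then 1 else 0) := by
        unfold zeros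
        rw [Finset.range_add_one, Finset.filter_insert]
        split_ifs with h <;> simp [Finset.card_insert_of_notMem, h]
      have hsum : ∑ j ∈ Finset.range (m + 1 - 1), rinc a j
          = (∑ j ∈ Finset.range (m - 1), rinc a j) + rinc a (m - 1) := by
        rw [show m + 1 - 1 = (m - 1) + 1 by omega, Finset.sum_range_succ]
      have hr := rinc_spec ha (j := m - 1) (by omega)
      have hml : m - 1 + 1 = m := by omega
      rw [hml] at hr
      simp only [Nat.add_sub_cancel] at *
      rw [hz, hsum]
      split_ifs at * <;> omega

lemma sum_rinc_eq (n : ℕ) (a : ℕ → ℕ) (ha : DSF n a) (M : ℕ)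
    (hM : ∀ j ∈ Finset.range (n - 1), rinc a j < M) :
    ∑ j ∈ Finset.range (n - 1), rinc a j
      = ∑ r ∈ Finset.range M, r * incCount n a r := by
  have hfib : ∀ r, incCount n a r
      = ((Finset.range (n - 1)).filter fun j => rinc a j = r).card := by
    intro r
    unfold incCount
    congr 1
    apply Finset.filter_congr
    intro j hj
    simp only [Finset.mem_range] at hj
    have := rinc_spec ha (j := j) (by omega)
    constructor <;> intro h <;> omega
  have := Finset.sum_fiberwise_of_maps_to (g := rinc a) (f := rinc a)
    (s := Finset.range (n - 1)) (t := Finset.range M)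
    (fun j hj => Finset.mem_range.mpr (hM j hj))
  rw [← this]
  refine Finset.sum_congr rfl fun r _ => ?_
  rw [hfib r, Finset.sum_congr rfl (fun j hj => (Finset.mem_filter.mp hj).2),
    Finset.sum_const, smul_eq_mul, mul_comm]

theorem stmt0 (n : ℕ) (hn : 0 < n) (a b : ℕ → ℕ)
    (ha : DSF n a) (hb : DSF n b) (hab : TauEquiv n a b) :
    a (n - 1) ∈ ({0, 1} : Set ℕ) ↔ b (n - 1) ∈ ({0, 1} : Set ℕ) := by
  obtain ⟨h0, hz, hr⟩ := hab
  set M := (∑ j ∈ Finset.range (n - 1), rinc a j)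
    + (∑ j ∈ Finset.range (n - 1), rinc b j) + 1 with hM
  have hbound : ∀ (c : ℕ → ℕ), ∀ j ∈ Finset.range (n - 1), rinc c j ≤ ∑ i ∈ Finset.range (n-1), rinc c i :=
    fun c j hj => Finset.single_le_sum (fun i _ => Nat.zero_le _) hj
  have hsa := sum_rinc_eq n a ha M (fun j hj => by have := hbound a j hj; omega)
  have hsb := sum_rinc_eq n b hb M (fun j hj => by have := hbound b j hj; omega)
  have hsum : ∑ j ∈ Finset.range (n - 1), rinc a j = ∑ j ∈ Finset.range (n - 1), rinc b j := by
    rw [hsa, hsb]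
    exact Finset.sum_congr rfl fun r _ => by rw [hr r]
  have ka := key n hn a ha
  have kb := key n hn b hb
  rw [h0, hz, hsum] at ka
  simp only [Set.mem_insert_iff, Set.mem_singleton_iff]
  split_ifs at ka kb <;> omega
end

section
/- Let a, b be down-skip-free strings of length n in ℕ₀ that are τ-equivalent. If the last entry a_n = r for some r > 1, then b_n = r as well. -/
/-- the zero-adjusted increment at position j -/
def finc (a : ℕ → ℕ) (j : ℕ) : ℕ := a (j + 1) + (if a j = 0 then 0 else 1) - a j

lemma finc_le {n : ℕ} {a : ℕ → ℕ} (ha : DSF n a) {j : ℕ} (hj : j ∈ Finset.range (n-1)) :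
    a j ≤ a (j + 1) + (if a j = 0 then 0 else 1) := by
  by_cases h : a j = 0
  · simp [h]
  · simp only [h, if_neg]
    have hj' : j + 1 < n := by
      have := Finset.mem_range.1 hj; omega
    simpa using ha j hj'

lemma incCount_eq_card_fiber {n : ℕ} {a : ℕ → ℕ} (ha : DSF n a) (r : ℕ) :
    incCount n a r = ((Finset.range (n-1)).filter fun j => finc a j = r).card := by
  unfold incCount
  congr 1
  apply Finset.filter_congr
  intro j hj
  have h := finc_le ha hj
  unfold finc
  split_ifs at h ⊢ <;> omega

lemma sum_r_incCount {n M : ℕ} {a : ℕ → ℕ} (ha : DSF n a)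
    (hM : ∀ j ∈ Finset.range (n-1), finc a j < M) :
    ∑ r ∈ Finset.range M, r * incCount n a r = ∑ j ∈ Finset.range (n-1), finc a j := by
  rw [← Finset.sum_fiberwise_of_maps_to (g := finc a) (t := Finset.range M)
      (fun j hj => Finset.mem_range.2 (hM j hj))]
  apply Finset.sum_congr rfl
  intro r _
  rw [incCount_eq_card_fiber ha r]
  rw [Finset.sum_congr rfl (fun j hj => (Finset.mem_filter.1 hj).2), Finset.sum_const,
    smul_eq_mul, mul_comm]

lemma sum_finc_eq {n : ℕ} {a : ℕ → ℕ} (hn : 0 < n) (ha : DSF n a) :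
    ((∑ j ∈ Finset.range (n-1), finc a j : ℕ) : ℤ)
      = (a (n-1) : ℤ) - a 0 + ((Finset.range (n-1)).filter fun j => a j ≠ 0).card := by
  push_cast
  have : ∀ j ∈ Finset.range (n-1), ((finc a j : ℕ) : ℤ)
      = ((a (j+1) : ℤ) - a j) + (if a j = 0 then 0 else 1) := by
    intro j hj
    have h := finc_le (n := n) ha hj
    unfold finc
    push_cast [Nat.cast_sub h]
    by_cases h0 : a j = 0 <;> simp [h0] <;> ring
  rw [Finset.sum_congr rfl this, Finset.sum_add_distrib]
  have t1 : ∑ j ∈ Finset.range (n-1), ((a (j+1) : ℤ) - a j) = (a (n-1) : ℤ) - a 0 :=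
    Finset.sum_range_sub (fun i => (a i : ℤ)) (n-1)
  have t2 : ∑ j ∈ Finset.range (n-1), (if a j = 0 then (0:ℤ) else 1)
      = ((Finset.range (n-1)).filter fun j => a j ≠ 0).card := by
    rw [← Finset.sum_boole]
    apply Finset.sum_congr rfl
    intro j _
    by_cases h0 : a j = 0 <;> simp [h0]
  rw [t1, t2]

lemma zeros_split {n : ℕ} (hn : 0 < n) (a : ℕ → ℕ) :
    zeros n a = ((Finset.range (n-1)).filter fun k => a k = 0).card
      + (if a (n-1) = 0 then 1 else 0) := by
  unfold zeros
  have : n = (n-1) + 1 := by omega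
  rw [this, Finset.range_add_one, Finset.filter_insert]
  by_cases h : a (n-1) = 0
  · rw [if_pos h, Finset.card_insert_of_notMem (by simp)]
    simp [h]
  · simp [h]

theorem stmt1 (n : ℕ) (hn : 0 < n) (a b : ℕ → ℕ)
    (ha : DSF n a) (hb : DSF n b) (hab : TauEquiv n a b)
    (r : ℕ) (hr : 1 < r) (han : a (n - 1) = r) :
    b (n - 1) = r := by
  obtain ⟨h0, hz, hinc⟩ := hab
  set M := (∑ j ∈ Finset.range (n-1), finc a j) + (∑ j ∈ Finset.range (n-1), finc b j) + 1
    with hM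
  have hMa : ∀ j ∈ Finset.range (n-1), finc a j < M := by
    intro j hj
    have := Finset.single_le_sum (f := finc a) (fun i _ => Nat.zero_le _) hj
    omega
  have hMb : ∀ j ∈ Finset.range (n-1), finc b j < M := by
    intro j hj
    have := Finset.single_le_sum (f := finc b) (fun i _ => Nat.zero_le _) hj
    omega
  have hsum : ∑ j ∈ Finset.range (n-1), finc a j = ∑ j ∈ Finset.range (n-1), finc b j := by
    rw [← sum_r_incCount ha hMa, ← sum_r_incCount hb hMb]
    exact Finset.sum_congr rfl (fun r _ => by rw [hinc r])
  have Ea := sum_finc_eq hn ha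
  have Eb := sum_finc_eq hn hb
  -- card splits
  have hca : (((Finset.range (n-1)).filter fun j => a j ≠ 0).card)
      + (((Finset.range (n-1)).filter fun j => a j = 0).card) = n - 1 := by
    rw [add_comm]
    simpa using Finset.card_filter_add_card_filter_not
      (s := Finset.range (n-1)) (p := fun j => a j = 0)
  have hcb : (((Finset.range (n-1)).filter fun j => b j ≠ 0).card)
      + (((Finset.range (n-1)).filter fun j => b j = 0).card) = n - 1 := by
    rw [add_comm]
    simpa using Finset.card_filter_add_card_filter_not
      (s := Finset.range (n-1)) (p := fun j => b j = 0)
  have hza := zeros_split hn a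
  have hzb := zeros_split hn b
  rw [han] at hza Ea
  have ha0 : (if r = 0 then 1 else 0) = 0 := by simp; omega
  rw [ha0] at hza
  -- now combine everything over ℤ
  have key : (r : ℤ) - a 0 + (((Finset.range (n-1)).filter fun j => a j ≠ 0).card)
      = (b (n-1) : ℤ) - b 0 + (((Finset.range (n-1)).filter fun j => b j ≠ 0).card) := by
    rw [← Ea, ← Eb, hsum]
  have h0' : (a 0 : ℤ) = b 0 := by exact_mod_cast h0
  by_cases hb0 : b (n-1) = 0
  · rw [if_pos hb0] at hzb
    have hb0' : (b (n-1) : ℤ) = 0 := by exact_mod_cast hb0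
    omega
  · rw [if_neg hb0] at hzb
    omega
end

section
/- The statistic τ has S-structure on the space of down-skip-free strings: if a ∼_τ b are down-skip-free strings of length n and x ∼_τ y are down-skip-free strings of length m, and the concatenations a·x and b·y are again down-skip-free, then a·x ∼_τ b·y. -/
/-- Concatenation of a string of length `n` with another string. -/
def catStr (n : ℕ) (a x : ℕ → ℕ) : ℕ → ℕ := fun i => if i < n then a i else x (i - n)

/-- Sum of the zero-adjusted increments. -/
def Sval (n : ℕ) (a : ℕ → ℕ) : ℕ :=
  ∑ j ∈ Finset.range (n - 1), (a (j + 1) + (if a j = 0 then 0 else 1) - a j)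

lemma sum_range_split (f : ℕ → ℕ) (p q : ℕ) :
    ∑ i ∈ Finset.range (p + q), f i =
      (∑ i ∈ Finset.range p, f i) + ∑ i ∈ Finset.range q, f (p + i) := by
  induction q with
  | zero => simp
  | succ q ih =>
    rw [← add_assoc, Finset.sum_range_succ, Finset.sum_range_succ, ih, add_assoc]

lemma dsf_step {n : ℕ} {a : ℕ → ℕ} (ha : DSF n a) {j : ℕ} (hj : j + 1 < n) :
    a j ≤ a (j + 1) + (if a j = 0 then 0 else 1) := by
  have := ha j hj
  split <;> omega

/-- Counting via indicator: `incCount` as a sum. -/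
lemma incCount_eq_sum (n : ℕ) (a : ℕ → ℕ) (r : ℕ) :
    incCount n a r = ∑ j ∈ Finset.range (n - 1),
      (if a (j + 1) + (if a j = 0 then 0 else 1) = a j + r then 1 else 0) := by
  rw [incCount, Finset.card_filter]

/-- The telescoping identity. -/
lemma telescope (n : ℕ) (hn : 0 < n) (a : ℕ → ℕ) (ha : DSF n a) :
    a (n - 1) + (if a (n - 1) = 0 then 1 else 0) + (n - 1)
      = a 0 + Sval n a + zeros n a := by
  induction n with
  | zero => omega
  | succ n ih =>
    rcases Nat.eq_zero_or_pos n with rfl | hn'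
    · have hz : zeros 1 a = if a 0 = 0 then 1 else 0 := by
        rw [zeros, Finset.card_filter, Finset.sum_range_one]
      simp [Sval, hz]
    · have ha' : DSF n a := fun i hi => ha i (by omega)
      have key := ih hn' ha'
      have hstep : a (n - 1) ≤ a n + (if a (n - 1) = 0 then 0 else 1) := by
        have := dsf_step ha (j := n - 1) (by omega)
        have : n - 1 + 1 = n := by omega
        simpa [this] using dsf_step ha (j := n - 1) (by omega)
      have hS : Sval (n + 1) a = Sval n a +
          (a n + (if a (n - 1) = 0 then 0 else 1) - a (n - 1)) := by
        have h1 : n + 1 - 1 = (n - 1) + 1 := by omega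
        rw [Sval, h1, Finset.sum_range_succ]
        have h2 : n - 1 + 1 = n := by omega
        rw [h2]; rfl
      have hz : zeros (n + 1) a = zeros n a + (if a n = 0 then 1 else 0) := by
        rw [zeros, zeros, Finset.card_filter, Finset.card_filter,
          Finset.sum_range_succ]
      simp only [Nat.add_sub_cancel]
      rw [hS, hz]
      split <;> split <;> split at key <;> split at hstep <;> omega

/-- Sum of increments as a weighted count. -/
lemma sval_eq_weighted (n : ℕ) (a : ℕ → ℕ) (ha : DSF n a) (R : ℕ)
    (hR : ∀ j, j < n - 1 → a (j + 1) + (if a j = 0 then 0 else 1) - a j < R) :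
    Sval n a = ∑ r ∈ Finset.range R, r * incCount n a r := by
  have : ∀ r ∈ Finset.range R, r * incCount n a r =
      ∑ j ∈ Finset.range (n - 1),
        (if a (j + 1) + (if a j = 0 then 0 else 1) - a j = r then r else 0) := by
    intro r _
    rw [incCount_eq_sum, Finset.mul_sum]
    refine Finset.sum_congr rfl fun j hj => ?_
    have hj' : j < n - 1 := Finset.mem_range.mp hj
    have hle := dsf_step ha (j := j) (by omega)
    have hcond : (a (j + 1) + (if a j = 0 then 0 else 1) = a j + r)
        ↔ (a (j + 1) + (if a j = 0 then 0 else 1) - a j = r) := by omega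
    simp only [hcond]
    split <;> simp
  rw [Finset.sum_congr rfl this, Finset.sum_comm]
  refine Finset.sum_congr rfl fun j hj => ?_
  have hj' : j < n - 1 := Finset.mem_range.mp hj
  rw [Finset.sum_ite_eq (Finset.range R)]
  simp [Finset.mem_range.mpr (hR j hj')]

/-- τ-equivalent DSF strings have equal increment sums. -/
lemma sval_eq_of_tau (n : ℕ) (a b : ℕ → ℕ) (ha : DSF n a) (hb : DSF n b)
    (hab : TauEquiv n a b) : Sval n a = Sval n b := by
  obtain ⟨_, _, hinc⟩ := hab
  set R := (Sval n a + Sval n b) + 1 with hRdef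
  have bound : ∀ (c : ℕ → ℕ), ∀ j, j < n - 1 →
      c (j + 1) + (if c j = 0 then 0 else 1) - c j ≤ Sval n c := by
    intro c j hj
    exact Finset.single_le_sum (f := fun j =>
      c (j + 1) + (if c j = 0 then 0 else 1) - c j)
      (fun _ _ => Nat.zero_le _) (Finset.mem_range.mpr hj)
  rw [sval_eq_weighted n a ha R (fun j hj => by have := bound a j hj; omega),
      sval_eq_weighted n b hb R (fun j hj => by have := bound b j hj; omega)]
  exact Finset.sum_congr rfl fun r _ => by rw [hinc r]

/-- The "pseudo-last-entry" `a (n-1) + [a (n-1) = 0]` is a τ-invariant. -/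
lemma last_invariant (n : ℕ) (hn : 0 < n) (a b : ℕ → ℕ) (ha : DSF n a)
    (hb : DSF n b) (hab : TauEquiv n a b) :
    a (n - 1) + (if a (n - 1) = 0 then 1 else 0)
      = b (n - 1) + (if b (n - 1) = 0 then 1 else 0) := by
  have h1 := telescope n hn a ha
  have h2 := telescope n hn b hb
  have h3 := sval_eq_of_tau n a b ha hb hab
  obtain ⟨h0, hz, _⟩ := hab
  omega

lemma cat_lt {n : ℕ} {a x : ℕ → ℕ} {i : ℕ} (h : i < n) : catStr n a x i = a i :=
  if_pos h

lemma cat_ge {n : ℕ} {a x : ℕ → ℕ} {k : ℕ} : catStr n a x (n + k) = x k := by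
  rw [catStr, if_neg (by omega), Nat.add_sub_cancel_left]

lemma zeros_cat (n m : ℕ) (a x : ℕ → ℕ) :
    zeros (n + m) (catStr n a x) = zeros n a + zeros m x := by
  rw [zeros, zeros, zeros, Finset.card_filter, Finset.card_filter,
    Finset.card_filter, sum_range_split]
  congr 1
  · exact Finset.sum_congr rfl fun i hi => by rw [cat_lt (Finset.mem_range.mp hi)]
  · exact Finset.sum_congr rfl fun i _ => by rw [cat_ge]

lemma incCount_cat (n m : ℕ) (hn : 0 < n) (hm : 0 < m) (a x : ℕ → ℕ) (r : ℕ) :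
    incCount (n + m) (catStr n a x) r = incCount n a r +
      ((if x 0 + (if a (n - 1) = 0 then 0 else 1) = a (n - 1) + r then 1 else 0) +
        incCount m x r) := by
  obtain ⟨k, rfl⟩ : ∃ k, n = k + 1 := ⟨n - 1, by omega⟩
  obtain ⟨l, rfl⟩ : ∃ l, m = l + 1 := ⟨m - 1, by omega⟩
  rw [incCount_eq_sum, incCount_eq_sum, incCount_eq_sum]
  have h1 : k + 1 + (l + 1) - 1 = (k + 1) + l := by omega
  rw [h1, sum_range_split, Finset.sum_range_succ]
  have hka : catStr (k + 1) a x (k + 1) = x 0 := by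
    rw [catStr]; simp
  have hsum1 : ∀ j ∈ Finset.range k,
      (if catStr (k + 1) a x (j + 1) +
          (if catStr (k + 1) a x j = 0 then 0 else 1) =
          catStr (k + 1) a x j + r then 1 else 0) =
      (if a (j + 1) + (if a j = 0 then 0 else 1) = a j + r then 1 else 0) := by
    intro j hj
    have hj' := Finset.mem_range.mp hj
    rw [cat_lt (by omega), cat_lt (by omega)]
  have hsum2 : ∀ j ∈ Finset.range l,
      (if catStr (k + 1) a x (k + 1 + j + 1) +
          (if catStr (k + 1) a x (k + 1 + j) = 0 then 0 else 1) =
          catStr (k + 1) a x (k + 1 + j) + r then 1 else 0) =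
      (if x (j + 1) + (if x j = 0 then 0 else 1) = x j + r then 1 else 0) := by
    intro j _
    have e1 : k + 1 + j + 1 = (k + 1) + (j + 1) := by omega
    rw [e1, cat_ge, cat_ge]
  simp only [Nat.add_sub_cancel]
  rw [Finset.sum_congr rfl hsum1, Finset.sum_congr rfl hsum2,
    cat_lt (show k < k + 1 by omega), hka]
  omega

theorem stmt3 (n m : ℕ) (hn : 0 < n) (hm : 0 < m) (a b x y : ℕ → ℕ)
    (ha : DSF n a) (hb : DSF n b) (hx : DSF m x) (hy : DSF m y)
    (hab : TauEquiv n a b) (hxy : TauEquiv m x y)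
    (hax : DSF (n + m) (catStr n a x)) (hby : DSF (n + m) (catStr n b y)) :
    TauEquiv (n + m) (catStr n a x) (catStr n b y) := by
  have hinv := last_invariant n hn a b ha hb hab
  have hx0 : x 0 = y 0 := hxy.1
  refine ⟨?_, ?_, ?_⟩
  · rw [cat_lt hn, cat_lt hn]; exact hab.1
  · rw [zeros_cat, zeros_cat, hab.2.1, hxy.2.1]
  · intro r
    rw [incCount_cat n m hn hm a x r, incCount_cat n m hn hm b y r,
      hab.2.2 r, hxy.2.2 r]
    have hiff : ∀ (t u : ℕ), (u + (if t = 0 then 0 else 1) = t + r) ↔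
        (u + 1 = t + (if t = 0 then 1 else 0) + r) := by
      intro t u; split <;> omega
    simp only [hiff, hinv, hx0]
end

section
/- For a Markov chain on a countable state space, the terminal state of a finite trajectory is determined by its initial state together with the matrix of transition counts: if two strings of the same length have the same initial state and identical transition-count matrices, then they have the same terminal state. -/
/-- Transition counts of the string `x 0, …, x (n-1)`. -/
def transCount {S : Type*} [DecidableEq S] (n : ℕ) (x : ℕ → S) (r s : S) : ℕ :=
  ((Finset.range (n - 1)).filter fun j => x j = r ∧ x (j + 1) = s).card

theorem stmt5 {S : Type*} [DecidableEq S] [Countable S] (n : ℕ) (hn : 0 < n)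
    (x y : ℕ → S) (h0 : x 0 = y 0)
    (hT : ∀ r s, transCount n x r s = transCount n y r s) :
    x (n - 1) = y (n - 1) := by
  classical
  set m := n - 1 with hm
  have hnm : n = m + 1 := (Nat.succ_pred_eq_of_pos hn).symm
  set F := ((Finset.range n).image x) ∪ ((Finset.range n).image y) with hF
  have key : ∀ z : ℕ → S, (∀ j, j < n → z j ∈ F) → ∀ r : S,
      (∑ s ∈ F, transCount n z r s) + (if z m = r then 1 else 0)
        = (∑ s ∈ F, transCount n z s r) + (if z 0 = r then 1 else 0) := by
    intro z hz r
    have h1 : ∑ s ∈ F, transCount n z r s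
        = ((Finset.range m).filter fun j => z j = r).card := by
      simp only [transCount, Finset.card_filter, ← hm]
      rw [Finset.sum_comm]
      refine Finset.sum_congr rfl fun j hj => ?_
      have hmem : z (j + 1) ∈ F := hz _ (by
        have := Finset.mem_range.mp hj; omega)
      by_cases h : z j = r
      · simp [h, Finset.sum_ite_eq, hmem]
      · simp [h]
    have h2 : ∑ s ∈ F, transCount n z s r
        = ((Finset.range m).filter fun j => z (j + 1) = r).card := by
      simp only [transCount, Finset.card_filter, ← hm]
      rw [Finset.sum_comm]
      refine Finset.sum_congr rfl fun j hj => ?_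
      have hmem : z j ∈ F := hz _ (by
        have := Finset.mem_range.mp hj; omega)
      by_cases h : z (j + 1) = r
      · simp [h, Finset.sum_ite_eq, hmem]
      · simp [h]
    have hcA : ((Finset.range (m + 1)).filter fun j => z j = r).card
        = ((Finset.range m).filter fun j => z j = r).card + (if z m = r then 1 else 0) := by
      rw [Finset.card_filter, Finset.card_filter, Finset.sum_range_succ]
    have hcB : ((Finset.range (m + 1)).filter fun j => z j = r).card
        = ((Finset.range m).filter fun j => z (j + 1) = r).card
            + (if z 0 = r then 1 else 0) := by
      rw [Finset.card_filter, Finset.card_filter, Finset.sum_range_succ']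
    rw [h1, h2]
    omega
  have hxF : ∀ j, j < n → x j ∈ F := fun j hj =>
    Finset.mem_union_left _ (Finset.mem_image.mpr ⟨j, Finset.mem_range.mpr hj, rfl⟩)
  have hyF : ∀ j, j < n → y j ∈ F := fun j hj =>
    Finset.mem_union_right _ (Finset.mem_image.mpr ⟨j, Finset.mem_range.mpr hj, rfl⟩)
  have hsum1 : ∀ r, ∑ s ∈ F, transCount n x r s = ∑ s ∈ F, transCount n y r s :=
    fun r => Finset.sum_congr rfl fun s _ => hT r s
  have hsum2 : ∀ r, ∑ s ∈ F, transCount n x s r = ∑ s ∈ F, transCount n y s r :=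
    fun r => Finset.sum_congr rfl fun s _ => hT s r
  have kx := key x hxF (x m)
  have ky := key y hyF (x m)
  rw [hsum1, hsum2, h0] at kx
  simp only [if_pos rfl, if_true] at kx
  by_contra hne
  rw [if_neg (fun h => hne h.symm)] at ky
  omega
end

section
/- t-equivalence implies τ-equivalence for down-skip-free strings: if two down-skip-free strings of equal length have the same initial state and the same transition-count matrix, then they have the same number of zeros and the same counts of zero-adjusted increments. -/
/-!
Apart from the initial state, every component of τ counts positions `j` according to a
property of the transition `(x j, x (j+1))` alone (a zero other than `x 0` is counted
through the transition into it), so it is a sum of transition counts and hence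
determined by t.
-/

section TransitionCounts

variable {S : Type*} [DecidableEq S]

theorem card_filter_transition_eq_sum_transCount (n : ℕ) (x : ℕ → S) (P : S → S → Prop)
    [DecidableRel P] (T : Finset (S × S))
    (hT : ∀ j ∈ Finset.range (n - 1), (x j, x (j + 1)) ∈ T) :
    ((Finset.range (n - 1)).filter fun j => P (x j) (x (j + 1))).card
      = ∑ pq ∈ T.filter (fun pq => P pq.1 pq.2), transCount n x pq.1 pq.2 := by
  rw [Finset.card_eq_sum_card_fiberwise (f := fun j => (x j, x (j + 1)))
    (t := T.filter fun pq => P pq.1 pq.2) fun j hj => by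
      rw [Finset.mem_coe, Finset.mem_filter] at hj ⊢
      exact ⟨hT j hj.1, hj.2⟩]
  refine Finset.sum_congr rfl fun pq hpq => ?_
  rw [transCount, Finset.filter_filter]
  congr 1
  refine Finset.filter_congr fun j _ => ?_
  rw [Prod.ext_iff]
  constructor
  · exact fun h => h.2
  · rintro ⟨h1, h2⟩
    exact ⟨h1 ▸ h2 ▸ (Finset.mem_filter.mp hpq).2, h1, h2⟩

theorem card_filter_transition_eq_of_transCount_eq {n : ℕ} {x y : ℕ → S}
    (hT : ∀ r s, transCount n x r s = transCount n y r s) (P : S → S → Prop)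
    [DecidableRel P] :
    ((Finset.range (n - 1)).filter fun j => P (x j) (x (j + 1))).card
      = ((Finset.range (n - 1)).filter fun j => P (y j) (y (j + 1))).card := by
  set T := (Finset.range (n - 1)).image (fun j => (x j, x (j + 1)))
    ∪ (Finset.range (n - 1)).image (fun j => (y j, y (j + 1)))
  rw [card_filter_transition_eq_sum_transCount n x P T
      fun j hj => Finset.mem_union_left _ (Finset.mem_image_of_mem _ hj),
    card_filter_transition_eq_sum_transCount n y P T
      fun j hj => Finset.mem_union_right _ (Finset.mem_image_of_mem _ hj)]
  exact Finset.sum_congr rfl fun pq _ => hT pq.1 pq.2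

end TransitionCounts

theorem zeros_succ (m : ℕ) (a : ℕ → ℕ) :
    zeros (m + 1) a = ((Finset.range m).filter fun j => a (j + 1) = 0).card
      + if a 0 = 0 then 1 else 0 := by
  rw [zeros, Finset.card_filter, Finset.sum_range_succ', Finset.card_filter]

theorem stmt6_general (n : ℕ) (hn : 0 < n) (a b : ℕ → ℕ)
    (h0 : a 0 = b 0)
    (hT : ∀ r s, transCount n a r s = transCount n b r s) :
    TauEquiv n a b := by
  obtain ⟨m, rfl⟩ := Nat.exists_eq_add_one_of_ne_zero hn.ne'
  refine ⟨h0, ?_, fun r => card_filter_transition_eq_of_transCount_eq hT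
    fun p q => q + (if p = 0 then 0 else 1) = p + r⟩
  rw [zeros_succ, zeros_succ, h0]
  congr 1
  exact card_filter_transition_eq_of_transCount_eq hT fun _ q => q = 0

theorem stmt6 (n : ℕ) (hn : 0 < n) (a b : ℕ → ℕ)
    (ha : DSF n a) (hb : DSF n b) (h0 : a 0 = b 0)
    (hT : ∀ r s, transCount n a r s = transCount n b r s) :
    TauEquiv n a b :=
  stmt6_general n hn a b h0 hT
end
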